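/- Let z : Fin N → ℝ^D and e : Fin K → ℝ^D, and let π be a probability vector on Fin K with π_k = m_k/N, where the m_k are nonnegative integers summing to N. Then W_{dist}((1/N) ∑_n δ_{z n}, ∑_k π_k δ_{e k}) — the infimum, over all couplings of the two finitely supported measures on ℝ^D, of the expected Euclidean distance — equals (1/N) times the minimum, over all assignment functions σ : Fin N → Fin K with |σ⁻¹({k})| = m_k for every k, of ∑_n ‖z n − e (σ n)‖. -/

import Mathlib

open MeasureTheory ProbabilityTheory ENNReal

/-- Kantorovich cost `W_c(μ, ν)`: the infimum of `∫ c(x, y) dπ(x, y)` over all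
probability measures `π` on the product whose first marginal is `μ` and whose
second marginal is `ν`. -/
noncomputable def Wcost {X Y : Type*} [MeasurableSpace X] [MeasurableSpace Y]
    (c : X → Y → ℝ≥0∞) (μ : Measure X) (ν : Measure Y) : ℝ≥0∞ :=
  ⨅ (π : Measure (X × Y)) (_ : IsProbabilityMeasure π)
    (_ : π.fst = μ) (_ : π.snd = ν), ∫⁻ p, c p.1 p.2 ∂π

/-!
Splitting the mass of every atom evenly among the indices carrying it turns a coupling of two
uniform empirical measures on `N` atoms into `1/N` times a doubly stochastic `N × N` matrix. By
Birkhoff's theorem that matrix is a convex combination of permutation matrices, so the cost of any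
coupling is at least the cost of the cheapest permutation. The codebook measure is the empirical
measure of `e ∘ τ` for any assignment `τ` with fibre sizes `m`, and `τ ∘ ρ` is again such an
assignment for every permutation `ρ`; conversely each assignment `σ` yields the coupling
`(1/N) ∑ δ_(z i, e (σ i))`, whose cost is `(1/N) ∑ ‖z i - e (σ i)‖`.
-/

section Fibers

open Finset

theorem exists_card_fiber_eq {K : ℕ} {ι : Type*} [Fintype ι] (m : Fin K → ℕ)
    (hm : ∑ k, m k = Fintype.card ι) :
    ∃ τ : ι → Fin K, ∀ k, #{i | τ i = k} = m k := by
  let Φ : ι ≃ (k : Fin K) × Fin (m k) :=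
    (Fintype.equivFinOfCardEq hm.symm).trans finSigmaFinEquiv.symm
  refine ⟨fun i => (Φ i).1, fun k => ?_⟩
  have hfiber : ({s | s.1 = k} : Finset ((k : Fin K) × Fin (m k))) =
      ({k} : Finset (Fin K)).sigma fun _ => univ := by
    ext ⟨a, b⟩
    simp
  rw [Finset.card_equiv Φ (t := {s | s.1 = k}) (by simp), hfiber]
  simp

theorem card_fiber_comp_perm {ι κ : Type*} [Fintype ι] [DecidableEq κ] (τ : ι → κ)
    (ρ : Equiv.Perm ι) (k : κ) : #{i | τ (ρ i) = k} = #{i | τ i = k} :=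
  Finset.card_equiv ρ (by simp)

theorem sum_inv_card_fiber_mul {ι α : Type*} [Fintype ι] [DecidableEq α] (f : ι → α)
    (g : α → ℝ≥0∞) :
    ∑ i, (#{j | f j = f i} : ℝ≥0∞)⁻¹ * g (f i) = ∑ a ∈ univ.image f, g a := by
  refine (Finset.sum_image' _ fun i _ => ?_).symm
  have hfiber : ∀ j ∈ ({j | f j = f i} : Finset ι),
      (#{j' | f j' = f j} : ℝ≥0∞)⁻¹ * g (f j) = (#{j | f j = f i} : ℝ≥0∞)⁻¹ * g (f i) := by
    intro j hj
    rw [(Finset.mem_filter.1 hj).2]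
  have hpos : (#{j | f j = f i} : ℝ≥0∞) ≠ 0 :=
    Nat.cast_ne_zero.2 (Finset.card_pos.2 ⟨i, by simp⟩).ne'
  rw [Finset.sum_congr rfl hfiber, Finset.sum_const, nsmul_eq_mul,
    ENNReal.mul_inv_cancel_left hpos (ENNReal.natCast_ne_top _)]

end Fibers

section Empirical

open Finset

variable {X Y : Type*} [MeasurableSpace X] [MeasurableSpace Y] {ι : Type*} [Fintype ι]

noncomputable def empiricalMeasure (x : ι → X) : Measure X :=
  (Fintype.card ι : ℝ≥0∞)⁻¹ • ∑ i, Measure.dirac (x i)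

instance [Nonempty ι] (x : ι → X) : IsProbabilityMeasure (empiricalMeasure x) := by
  constructor
  simp [empiricalMeasure, ENNReal.inv_mul_cancel]

theorem map_empiricalMeasure {f : X → Y} (hf : Measurable f) (x : ι → X) :
    (empiricalMeasure x).map f = empiricalMeasure (f ∘ x) := by
  simp [empiricalMeasure, Measure.map_smul, Measure.map_finset_sum hf.aemeasurable,
    Measure.map_dirac' hf]

theorem lintegral_empiricalMeasure [MeasurableSingletonClass X] (x : ι → X) (f : X → ℝ≥0∞) :
    ∫⁻ a, f a ∂empiricalMeasure x = (Fintype.card ι : ℝ≥0∞)⁻¹ * ∑ i, f (x i) := by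
  simp [empiricalMeasure]

theorem empiricalMeasure_singleton [MeasurableSingletonClass X] [DecidableEq X] (x : ι → X)
    (a : X) : empiricalMeasure x {a} = (Fintype.card ι : ℝ≥0∞)⁻¹ * #{i | x i = a} := by
  simp [empiricalMeasure, Set.indicator_apply, Finset.sum_boole]

theorem inv_card_fiber_mul_empiricalMeasure_singleton [MeasurableSingletonClass X]
    [DecidableEq X] (x : ι → X) (i : ι) :
    (#{i' | x i' = x i} : ℝ≥0∞)⁻¹ * empiricalMeasure x {x i} = (Fintype.card ι : ℝ≥0∞)⁻¹ := by
  have hpos : (#{i' | x i' = x i} : ℝ≥0∞) ≠ 0 :=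
    Nat.cast_ne_zero.2 (Finset.card_pos.2 ⟨i, by simp⟩).ne'
  rw [empiricalMeasure_singleton, mul_left_comm,
    ENNReal.inv_mul_cancel hpos (ENNReal.natCast_ne_top _), mul_one]

theorem empiricalMeasure_compl_image [MeasurableSingletonClass X] [DecidableEq X] (x : ι → X) :
    empiricalMeasure x (univ.image x : Set X)ᶜ = 0 := by
  simp [empiricalMeasure, Measure.dirac_apply]

theorem empiricalMeasure_comp_eq_sum_smul_dirac {κ : Type*} [Fintype κ] [DecidableEq κ]
    (e : κ → X) (τ : ι → κ) (m : κ → ℕ) (hτ : ∀ k, #{i | τ i = k} = m k) :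
    empiricalMeasure (e ∘ τ) =
      ∑ k, ((m k : ℝ≥0∞) / Fintype.card ι) • Measure.dirac (e k) := by
  have hgroup : ∑ i, Measure.dirac (e (τ i)) = ∑ k, (m k : ℝ≥0∞) • Measure.dirac (e k) := by
    rw [← Finset.sum_fiberwise' univ τ fun k => Measure.dirac (e k)]
    refine Finset.sum_congr rfl fun k _ => ?_
    rw [Finset.sum_const, hτ k, Nat.cast_smul_eq_nsmul]
  simp only [empiricalMeasure, Function.comp_apply, hgroup, Finset.smul_sum, smul_smul,
    ENNReal.div_eq_inv_mul]

end Empirical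

section Wcost

variable {X Y : Type*} [MeasurableSpace X] [MeasurableSpace Y] (c : X → Y → ℝ≥0∞)
  {μ : Measure X} {ν : Measure Y}

theorem Wcost_le_lintegral (π : Measure (X × Y)) [IsProbabilityMeasure π] (hfst : π.fst = μ)
    (hsnd : π.snd = ν) : Wcost c μ ν ≤ ∫⁻ p, c p.1 p.2 ∂π :=
  iInf_le_of_le π <| iInf_le_of_le inferInstance <| iInf_le_of_le hfst <| iInf_le _ hsnd

theorem le_Wcost {b : ℝ≥0∞}
    (h : ∀ π : Measure (X × Y), IsProbabilityMeasure π → π.fst = μ → π.snd = ν →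
      b ≤ ∫⁻ p, c p.1 p.2 ∂π) : b ≤ Wcost c μ ν :=
  le_iInf fun π => le_iInf fun hπ => le_iInf fun hfst => le_iInf fun hsnd => h π hπ hfst hsnd

theorem Wcost_empiricalMeasure_le {ι : Type*} [Fintype ι] [Nonempty ι]
    [MeasurableSingletonClass X] [MeasurableSingletonClass Y] (x : ι → X) (y : ι → Y) :
    Wcost c (empiricalMeasure x) (empiricalMeasure y) ≤
      (Fintype.card ι : ℝ≥0∞)⁻¹ * ∑ i, c (x i) (y i) := by
  have hfst := map_empiricalMeasure measurable_fst fun i => (x i, y i)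
  have hsnd := map_empiricalMeasure measurable_snd fun i => (x i, y i)
  calc Wcost c (empiricalMeasure x) (empiricalMeasure y)
      ≤ ∫⁻ p, c p.1 p.2 ∂empiricalMeasure fun i => (x i, y i) :=
        Wcost_le_lintegral c _ hfst hsnd
    _ = _ := lintegral_empiricalMeasure _ fun p : X × Y => c p.1 p.2

end Wcost

section Birkhoff

open Finset

variable {n : Type*} [Fintype n] [DecidableEq n]

theorem exists_perm_weights_of_sum_eq_one (M : n → n → ℝ≥0∞) (hrow : ∀ i, ∑ j, M i j = 1)
    (hcol : ∀ j, ∑ i, M i j = 1) :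
    ∃ w : Equiv.Perm n → ℝ≥0∞, ∑ ρ, w ρ = 1 ∧ ∀ i j, M i j = ∑ ρ with ρ i = j, w ρ := by
  have hfin : ∀ i j, M i j ≠ ∞ := fun i j =>
    ne_top_of_le_ne_top (hrow i ▸ ENNReal.one_ne_top) (Finset.single_le_sum (by simp) (mem_univ j))
  have hDS : (Matrix.of fun i j => (M i j).toReal) ∈ doublyStochastic ℝ n := by
    refine mem_doublyStochastic_iff_sum.2
      ⟨fun _ _ => ENNReal.toReal_nonneg, fun i => ?_, fun j => ?_⟩
    · simp [← ENNReal.toReal_sum fun j _ => hfin i j, hrow]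
    · simp [← ENNReal.toReal_sum fun i _ => hfin i j, hcol]
  obtain ⟨w, hw0, hw1, hwM⟩ := exists_eq_sum_perm_of_mem_doublyStochastic hDS
  refine ⟨fun ρ => ENNReal.ofReal (w ρ), ?_, fun i j => ?_⟩
  · rw [← ENNReal.ofReal_sum_of_nonneg fun ρ _ => hw0 ρ, hw1, ENNReal.ofReal_one]
  · have hij : (M i j).toReal = ∑ ρ with ρ i = j, w ρ := by
      simpa [Matrix.sum_apply, Equiv.Perm.permMatrix, PEquiv.toMatrix_apply, Finset.sum_filter,
        eq_comm] using (congrFun (congrFun hwM i) j).symm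
    rw [← ENNReal.ofReal_toReal (hfin i j), hij, ENNReal.ofReal_sum_of_nonneg fun ρ _ => hw0 ρ]

theorem exists_perm_sum_le_sum_mul (M : n → n → ℝ≥0∞) (hrow : ∀ i, ∑ j, M i j = 1)
    (hcol : ∀ j, ∑ i, M i j = 1) (C : n → n → ℝ≥0∞) :
    ∃ σ : Equiv.Perm n, ∑ i, C i (σ i) ≤ ∑ i, ∑ j, M i j * C i j := by
  obtain ⟨w, hw1, hM⟩ := exists_perm_weights_of_sum_eq_one M hrow hcol
  obtain ⟨σ, hσ⟩ := Finite.exists_min fun ρ : Equiv.Perm n => ∑ i, C i (ρ i)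
  refine ⟨σ, ?_⟩
  calc ∑ i, C i (σ i) = ∑ ρ, w ρ * ∑ i, C i (σ i) := by rw [← Finset.sum_mul, hw1, one_mul]
    _ ≤ ∑ ρ, w ρ * ∑ i, C i (ρ i) := Finset.sum_le_sum fun ρ _ => mul_le_mul_right (hσ ρ) _
    _ = ∑ i, ∑ ρ, w ρ * C i (ρ i) := by simp only [Finset.mul_sum]; exact Finset.sum_comm
    _ = ∑ i, ∑ j, M i j * C i j := by
      refine Finset.sum_congr rfl fun i _ => ?_
      rw [← Finset.sum_fiberwise univ (fun ρ : Equiv.Perm n => ρ i)]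
      refine Finset.sum_congr rfl fun j _ => ?_
      rw [hM, Finset.sum_mul]
      exact Finset.sum_congr rfl fun ρ hρ => by rw [(Finset.mem_filter.1 hρ).2]

end Birkhoff

section Coupling

variable {X Y : Type*} [MeasurableSpace X] [MeasurableSpace Y] [MeasurableSingletonClass X]
  [MeasurableSingletonClass Y] {π : Measure (X × Y)}

theorem sum_measure_singleton_eq_fst_apply {T : Finset Y} (hT : π.snd (↑T)ᶜ = 0) (a : X) :
    ∑ b ∈ T, π {(a, b)} = π.fst {a} := by
  rw [Measure.fst_apply (measurableSet_singleton a),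
    ← measure_inter_conull (t := Prod.snd ⁻¹' ↑T)]
  · have hrect : Prod.fst ⁻¹' {a} ∩ Prod.snd ⁻¹' ↑T =
        (↑({a} ×ˢ T : Finset (X × Y)) : Set (X × Y)) := by
      rw [Finset.coe_product, Finset.coe_singleton]
      rfl
    rw [hrect, ← sum_measure_singleton, Finset.sum_product, Finset.sum_singleton]
  · rwa [← Set.preimage_compl, ← Measure.snd_apply T.measurableSet.compl]

theorem sum_measure_singleton_eq_snd_apply {S : Finset X} (hS : π.fst (↑S)ᶜ = 0) (b : Y) :
    ∑ a ∈ S, π {(a, b)} = π.snd {b} := by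
  rw [Measure.snd_apply (measurableSet_singleton b),
    ← measure_inter_conull (t := Prod.fst ⁻¹' ↑S)]
  · have hrect : Prod.snd ⁻¹' {b} ∩ Prod.fst ⁻¹' ↑S =
        (↑(S ×ˢ {b} : Finset (X × Y)) : Set (X × Y)) := by
      rw [Finset.coe_product, Finset.coe_singleton, Set.inter_comm]
      rfl
    rw [hrect, ← sum_measure_singleton, Finset.sum_product]
    simp
  · rwa [← Set.preimage_compl, ← Measure.fst_apply S.measurableSet.compl]

end Coupling

section IndexCoupling

open Finset

variable {X Y : Type*} [MeasurableSpace X] [MeasurableSpace Y] [MeasurableSingletonClass X]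
  [MeasurableSingletonClass Y] [DecidableEq X] [DecidableEq Y] {ι : Type*} [Fintype ι]

/-- The mass `π {(x i, y j)}` shared out evenly among all index pairs carrying the same atoms. -/
noncomputable def indexCoupling (π : Measure (X × Y)) (x : ι → X) (y : ι → Y) (i j : ι) :
    ℝ≥0∞ :=
  (#{i' | x i' = x i} : ℝ≥0∞)⁻¹ * ((#{j' | y j' = y j} : ℝ≥0∞)⁻¹ * π {(x i, y j)})

variable {π : Measure (X × Y)} {x : ι → X} {y : ι → Y}

theorem sum_indexCoupling_right (hfst : π.fst = empiricalMeasure x)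
    (hsnd : π.snd = empiricalMeasure y) (i : ι) :
    ∑ j, indexCoupling π x y i j = (Fintype.card ι : ℝ≥0∞)⁻¹ := by
  have hT : π.snd (univ.image y : Set Y)ᶜ = 0 := hsnd ▸ empiricalMeasure_compl_image y
  rw [← inv_card_fiber_mul_empiricalMeasure_singleton x i, ← hfst,
    ← sum_measure_singleton_eq_fst_apply hT, ← sum_inv_card_fiber_mul y, Finset.mul_sum]
  rfl

theorem sum_indexCoupling_left (hfst : π.fst = empiricalMeasure x)
    (hsnd : π.snd = empiricalMeasure y) (j : ι) :
    ∑ i, indexCoupling π x y i j = (Fintype.card ι : ℝ≥0∞)⁻¹ := by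
  have hS : π.fst (univ.image x : Set X)ᶜ = 0 := hfst ▸ empiricalMeasure_compl_image x
  rw [← inv_card_fiber_mul_empiricalMeasure_singleton y j, ← hsnd,
    ← sum_measure_singleton_eq_snd_apply hS, ← sum_inv_card_fiber_mul x, Finset.mul_sum]
  exact Finset.sum_congr rfl fun i _ => mul_left_comm _ _ _

theorem sum_indexCoupling_mul_le_lintegral (c : X → Y → ℝ≥0∞) :
    ∑ i, ∑ j, indexCoupling π x y i j * c (x i) (y j) ≤ ∫⁻ p, c p.1 p.2 ∂π := by
  calc ∑ i, ∑ j, indexCoupling π x y i j * c (x i) (y j)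
      = ∑ a ∈ univ.image x, ∑ b ∈ univ.image y, c a b * π {(a, b)} := by
        simp only [indexCoupling, mul_assoc, ← Finset.mul_sum]
        rw [← sum_inv_card_fiber_mul x]
        refine Finset.sum_congr rfl fun i _ => ?_
        rw [← sum_inv_card_fiber_mul y]
        simp only [mul_comm (c _ _)]
    _ = ∫⁻ p in ↑(univ.image x ×ˢ univ.image y), c p.1 p.2 ∂π := by
        rw [lintegral_finset, Finset.sum_product]
    _ ≤ ∫⁻ p, c p.1 p.2 ∂π := setLIntegral_le_lintegral _ _

end IndexCoupling

theorem iInf_perm_le_Wcost_empiricalMeasure {X Y : Type*} [MeasurableSpace X]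
    [MeasurableSpace Y] [MeasurableSingletonClass X] [MeasurableSingletonClass Y] {ι : Type*}
    [Fintype ι] [Nonempty ι] (c : X → Y → ℝ≥0∞) (x : ι → X) (y : ι → Y) :
    ⨅ σ : Equiv.Perm ι, (Fintype.card ι : ℝ≥0∞)⁻¹ * ∑ i, c (x i) (y (σ i)) ≤
      Wcost c (empiricalMeasure x) (empiricalMeasure y) := by
  classical
  have hcard : (Fintype.card ι : ℝ≥0∞) ≠ 0 := Nat.cast_ne_zero.2 Fintype.card_ne_zero
  have hcard' : (Fintype.card ι : ℝ≥0∞) ≠ ∞ := ENNReal.natCast_ne_top _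
  refine le_Wcost c fun π _ hfst hsnd => ?_
  obtain ⟨σ, hσ⟩ := exists_perm_sum_le_sum_mul
    (fun i j => Fintype.card ι * indexCoupling π x y i j)
    (fun i => by rw [← Finset.mul_sum, sum_indexCoupling_right hfst hsnd,
      ENNReal.mul_inv_cancel hcard hcard'])
    (fun j => by rw [← Finset.mul_sum, sum_indexCoupling_left hfst hsnd,
      ENNReal.mul_inv_cancel hcard hcard'])
    (fun i j => c (x i) (y j))
  calc ⨅ σ : Equiv.Perm ι, (Fintype.card ι : ℝ≥0∞)⁻¹ * ∑ i, c (x i) (y (σ i))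
      ≤ (Fintype.card ι : ℝ≥0∞)⁻¹ * ∑ i, c (x i) (y (σ i)) := iInf_le _ σ
    _ ≤ (Fintype.card ι : ℝ≥0∞)⁻¹ *
          ∑ i, ∑ j, Fintype.card ι * indexCoupling π x y i j * c (x i) (y j) := by gcongr
    _ = ∑ i, ∑ j, indexCoupling π x y i j * c (x i) (y j) := by
        simp only [mul_assoc, ← Finset.mul_sum]
        exact ENNReal.inv_mul_cancel_left hcard hcard'
    _ ≤ ∫⁻ p, c p.1 p.2 ∂π := sum_indexCoupling_mul_le_lintegral c

theorem inv_natCast_mul_sum_edist {E ι : Type*} [SeminormedAddCommGroup E] [Fintype ι] {N : ℕ}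
    (hN : 0 < N) (a b : ι → E) :
    (N : ℝ≥0∞)⁻¹ * ∑ i, edist (a i) (b i) = ENNReal.ofReal (1 / (N : ℝ) * ∑ i, ‖a i - b i‖) := by
  simp_rw [edist_dist, dist_eq_norm]
  rw [ENNReal.ofReal_mul (by positivity), one_div, ENNReal.ofReal_inv_of_pos (by positivity),
    ENNReal.ofReal_natCast, ENNReal.ofReal_sum_of_nonneg fun i _ => norm_nonneg _]

/-- **Eq. (68), Corollary 1 of the paper**: with `π_k = m_k / N` and `∑ k, m_k = N`, the
Wasserstein distance (Euclidean cost) between the empirical measure `(1/N) ∑ n, δ_{z n}`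
and the codebook measure `∑ k, π_k δ_{e k}` equals `(1/N)` times the minimum, over all
assignment functions `σ : Fin N → Fin K` whose fiber over each `k` has exactly `m k`
elements, of `∑ n, ‖z n − e (σ n)‖`. -/
theorem stmt8 {N K D : ℕ} (hN : 0 < N)
    (z : Fin N → EuclideanSpace ℝ (Fin D)) (e : Fin K → EuclideanSpace ℝ (Fin D))
    (m : Fin K → ℕ) (hm : ∑ k, m k = N) :
    ∃ σ₀ : Fin N → Fin K,
      (∀ k, (Finset.univ.filter (fun i => σ₀ i = k)).card = m k) ∧
      (∀ σ : Fin N → Fin K,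
        (∀ k, (Finset.univ.filter (fun i => σ i = k)).card = m k) →
        ∑ i, ‖z i - e (σ₀ i)‖ ≤ ∑ i, ‖z i - e (σ i)‖) ∧
      Wcost (fun a b => edist a b)
          ((N : ℝ≥0∞)⁻¹ • ∑ i, Measure.dirac (z i))
          (∑ k, ((m k : ℝ≥0∞) / (N : ℝ≥0∞)) • Measure.dirac (e k))
        = ENNReal.ofReal ((1 / (N : ℝ)) * ∑ i, ‖z i - e (σ₀ i)‖) := by
  have : Nonempty (Fin N) := ⟨⟨0, hN⟩⟩
  obtain ⟨τ, hτ⟩ := exists_card_fiber_eq (ι := Fin N) m (by rw [hm, Fintype.card_fin])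
  obtain ⟨σ₀, hσ₀, hmin⟩ := Set.exists_min_image
    {σ : Fin N → Fin K | ∀ k, (Finset.univ.filter (fun i => σ i = k)).card = m k}
    (fun σ => ∑ i, ‖z i - e (σ i)‖) (Set.toFinite _) ⟨τ, hτ⟩
  have hz : (N : ℝ≥0∞)⁻¹ • ∑ i, Measure.dirac (z i) = empiricalMeasure z := by
    simp [empiricalMeasure]
  have he : ∀ σ : Fin N → Fin K, (∀ k, (Finset.univ.filter (fun i => σ i = k)).card = m k) →
      ∑ k, ((m k : ℝ≥0∞) / N) • Measure.dirac (e k) = empiricalMeasure (e ∘ σ) := by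
    intro σ hσ
    rw [empiricalMeasure_comp_eq_sum_smul_dirac e σ m hσ, Fintype.card_fin]
  refine ⟨σ₀, hσ₀, hmin, le_antisymm ?_ ?_⟩
  · rw [hz, he σ₀ hσ₀, ← inv_natCast_mul_sum_edist hN]
    simpa using Wcost_empiricalMeasure_le (fun a b => edist a b) z (e ∘ σ₀)
  · rw [hz, he τ hτ]
    refine le_trans (le_iInf fun ρ => ?_)
      (iInf_perm_le_Wcost_empiricalMeasure (fun a b => edist a b) z (e ∘ τ))
    rw [Fintype.card_fin, inv_natCast_mul_sum_edist hN]
    exact ENNReal.ofReal_le_ofReal <| mul_le_mul_of_nonneg_left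
      (hmin _ fun k => (card_fiber_comp_perm τ ρ k).trans (hτ k)) (by positivity)
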